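/- There exists a finite rotation-puzzle instance 𝒜 over the three-color tile set T_3 (the COPY subpuzzle, splitting a wire into two copies) with one designated input boundary edge at its bottom and two designated output boundary edges at its top lying in two distinct columns, such that for each color c ∈ {blue, red} the instance 𝒜 has exactly one solution whose color at the input edge is c, and this solution has color c at both output edges. -/

import Mathlib

/-- The three Tantrix colors used in the three-color tile set. -/
inductive Color where
  | red
  | yellow
  | blue
deriving DecidableEq

/-- A tile is its clockwise color sequence: a word of length 6 over the colors,
edges indexed `0, …, 5` clockwise. -/
abbrev Tile := Fin 6 → Color

/-- Cyclic rotation of a tile by `k` steps: edge `i` of the rotated tile carries the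
color of edge `i + k` of the original sequence. -/
def rotTile (k : Fin 6) (t : Tile) : Tile := fun i => t (i + k)

open Color in
/-- The three-color tile set `T₃`, consisting of the 14 color sequences
yrrbby, ryybbr, yrrybb, ryyrbb, brrbyy, yrbybr, rbyryb, brybyr, brbyyr, bybrry,
ryrbby, rbryyb, ybyrrb, yrybbr. -/
def T3 : Set Tile :=
  { ![yellow,red,red,blue,blue,yellow],
    ![red,yellow,yellow,blue,blue,red],
    ![yellow,red,red,yellow,blue,blue],
    ![red,yellow,yellow,red,blue,blue],
    ![blue,red,red,blue,yellow,yellow],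
    ![yellow,red,blue,yellow,blue,red],
    ![red,blue,yellow,red,yellow,blue],
    ![blue,red,yellow,blue,yellow,red],
    ![blue,red,blue,yellow,yellow,red],
    ![blue,yellow,blue,red,red,yellow],
    ![red,yellow,red,blue,blue,yellow],
    ![red,blue,red,yellow,yellow,blue],
    ![yellow,blue,yellow,red,red,blue],
    ![yellow,red,yellow,blue,blue,red] }

/-- The six neighbor offsets of the hexagonal layout of `ℤ²`, listed clockwise
starting from straight up; edge `i` of a tile at `x` is the edge shared with the
neighboring point `x + dirs i`, and opposite directions differ by `3` (mod 6).
Two points are neighbors exactly if their difference is one of these offsets. -/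
def dirs : Fin 6 → ℤ × ℤ := ![(0,1), (1,1), (1,0), (0,-1), (-1,-1), (-1,0)]

/-- A finite rotation-puzzle instance over the tile set `T3`:
a function from a finite set of points of `ℤ²` to `T3`. -/
structure Puzzle where
  tiles : ℤ × ℤ → Option Tile
  finite : {x | tiles x ≠ none}.Finite
  memT3 : ∀ x t, tiles x = some t → t ∈ T3

/-- `sol` is a solution of the instance `P`: it assigns to each occupied point a
cyclic rotation of the tile placed there, such that for every pair of neighboring
occupied points the two assigned sequences give the same color to their joint edge
(edge `d` of the tile at `x` is glued to edge `d + 3` of the tile at `x + dirs d`). -/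
def IsSolution (P : Puzzle) (sol : ℤ × ℤ → Option Tile) : Prop :=
  (∀ x, (P.tiles x = none → sol x = none) ∧
    (∀ t, P.tiles x = some t → ∃ k : Fin 6, sol x = some (rotTile k t))) ∧
  (∀ (x : ℤ × ℤ) (d : Fin 6) (s s' : Tile),
    sol x = some s → sol (x + dirs d) = some s' → s d = s' (d + 3))

/-- `(x, d)` is a boundary edge of `P`: the point `x` is occupied and its
neighbor in direction `d` is not. -/
def IsBoundary (P : Puzzle) (x : ℤ × ℤ) (d : Fin 6) : Prop :=
  P.tiles x ≠ none ∧ P.tiles (x + dirs d) = none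

/-- The solution `sol` has color `c` at the edge in direction `d` of the tile at `x`. -/
def SolColor (sol : ℤ × ℤ → Option Tile) (x : ℤ × ℤ) (d : Fin 6) (c : Color) : Prop :=
  ∃ s, sol x = some s ∧ s d = c

/-! A solution is determined by the rotations of the four tiles of the gadget
(yrrbby at (0,0), yrbybr at (0,1), yrybbr at (1,1), yrrbby at (1,2)), and matching only
has to be checked at the edges of these four sites. Running through all 6⁴ rotation
assignments shows that exactly three are solutions, with input colors blue, yellow and red;
in the blue and the red one both output edges repeat the input color. -/

def EdgesMatch (sol : ℤ × ℤ → Option Tile) : Prop :=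
  ∀ (x : ℤ × ℤ) (d : Fin 6) (s s' : Tile),
    sol x = some s → sol (x + dirs d) = some s' → s d = s' (d + 3)

def EdgesMatchOn (S : List (ℤ × ℤ)) (sol : ℤ × ℤ → Option Tile) : Prop :=
  ∀ x ∈ S, ∀ d : Fin 6, ∀ s ∈ sol x, ∀ s' ∈ sol (x + dirs d), s d = s' (d + 3)

instance (S : List (ℤ × ℤ)) (sol : ℤ × ℤ → Option Tile) :
    Decidable (EdgesMatchOn S sol) :=
  inferInstanceAs (Decidable (∀ x ∈ S, _))

theorem edgesMatch_iff_edgesMatchOn {S : List (ℤ × ℤ)} {sol : ℤ × ℤ → Option Tile}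
    (hS : ∀ x, sol x ≠ none → x ∈ S) : EdgesMatch sol ↔ EdgesMatchOn S sol :=
  ⟨fun h x _ d s hs s' hs' => h x d s s' hs hs',
    fun h x d s s' hs hs' => h x (hS x (by simp [hs])) d s hs s' hs'⟩

instance (sol : ℤ × ℤ → Option Tile) (x : ℤ × ℤ) (d : Fin 6) (c : Color) :
    Decidable (SolColor sol x d c) :=
  decidable_of_iff ((sol x).map (· d) = some c) (by simp [SolColor])

instance (P : Puzzle) (x : ℤ × ℤ) (d : Fin 6) : Decidable (IsBoundary P x d) :=
  inferInstanceAs (Decidable (_ ∧ _))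

namespace Puzzle

variable (P : Puzzle)

def rotate (k : ℤ × ℤ → Fin 6) : ℤ × ℤ → Option Tile :=
  fun x => (P.tiles x).map (rotTile (k x))

theorem rotate_congr {k k' : ℤ × ℤ → Fin 6} (h : ∀ x, P.tiles x ≠ none → k x = k' x) :
    P.rotate k = P.rotate k' := by
  funext x
  cases hx : P.tiles x with
  | none => simp [rotate, hx]
  | some t => simp [rotate, hx, h x (by simp [hx])]

theorem rotate_ne_none_iff {k : ℤ × ℤ → Fin 6} {x : ℤ × ℤ} :
    P.rotate k x ≠ none ↔ P.tiles x ≠ none := by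
  simp [rotate]

theorem isSolution_iff {sol : ℤ × ℤ → Option Tile} :
    IsSolution P sol ↔ (∃ k, sol = P.rotate k) ∧ EdgesMatch sol := by
  refine and_congr_left' ⟨fun h => ?_, ?_⟩
  · have : ∀ x, ∃ k, sol x = (P.tiles x).map (rotTile k) := by
      intro x
      cases hx : P.tiles x with
      | none => exact ⟨0, (h x).1 hx⟩
      | some t => exact (h x).2 t hx
    choose k hk using this
    exact ⟨k, funext hk⟩
  · rintro ⟨k, rfl⟩ x
    exact ⟨fun hx => by simp [rotate, hx], fun t hx => ⟨k x, by simp [rotate, hx]⟩⟩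

end Puzzle

open Color

def yrrbby : Tile := ![yellow, red, red, blue, blue, yellow]
def yrbybr : Tile := ![yellow, red, blue, yellow, blue, red]
def yrybbr : Tile := ![yellow, red, yellow, blue, blue, red]

def copySites : List (ℤ × ℤ) := [(0, 0), (0, 1), (1, 1), (1, 2)]

def copyTiles (x : ℤ × ℤ) : Option Tile :=
  if x = (0, 0) then some yrrbby
  else if x = (0, 1) then some yrbybr
  else if x = (1, 1) then some yrybbr
  else if x = (1, 2) then some yrrbby
  else none

theorem mem_copySites_of_copyTiles_ne_none {x : ℤ × ℤ} (hx : copyTiles x ≠ none) :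
    x ∈ copySites := by
  unfold copyTiles at hx
  split_ifs at hx <;> simp_all [copySites]

theorem copyTiles_mem_T3 {x : ℤ × ℤ} {t : Tile} (hx : copyTiles x = some t) : t ∈ T3 := by
  unfold copyTiles at hx
  split_ifs at hx <;> cases hx <;> simp [T3, yrrbby, yrbybr, yrybbr]

def copyPuzzle : Puzzle where
  tiles := copyTiles
  finite := (List.finite_toSet copySites).subset fun _ => mem_copySites_of_copyTiles_ne_none
  memT3 _ _ := copyTiles_mem_T3

def siteRotation (q : Fin 6 × Fin 6 × Fin 6 × Fin 6) (x : ℤ × ℤ) : Fin 6 :=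
  if x = (0, 1) then q.2.1 else if x = (1, 1) then q.2.2.1 else if x = (1, 2) then q.2.2.2
  else q.1

def copySolution (q : Fin 6 × Fin 6 × Fin 6 × Fin 6) : ℤ × ℤ → Option Tile :=
  copyPuzzle.rotate (siteRotation q)

def copyRotations : List (Fin 6 × Fin 6 × Fin 6 × Fin 6) :=
  [(1, 4, 1, 4), (3, 5, 0, 2), (4, 5, 2, 2)]

theorem edgesMatchOn_copySolution_iff :
    ∀ q, EdgesMatchOn copySites (copySolution q) ↔ q ∈ copyRotations := by
  rintro ⟨a, b, c, d⟩
  revert a b c d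
  decide

theorem isSolution_copyPuzzle_iff {sol : ℤ × ℤ → Option Tile} :
    IsSolution copyPuzzle sol ↔ ∃ q ∈ copyRotations, sol = copySolution q := by
  have hS q : ∀ x, copySolution q x ≠ none → x ∈ copySites := fun x hx =>
    mem_copySites_of_copyTiles_ne_none ((copyPuzzle.rotate_ne_none_iff).1 hx)
  rw [copyPuzzle.isSolution_iff]
  constructor
  · rintro ⟨⟨k, rfl⟩, hk⟩
    let q := (k (0, 0), k (0, 1), k (1, 1), k (1, 2))
    have hq : copyPuzzle.rotate k = copySolution q := by
      refine copyPuzzle.rotate_congr fun x hx => ?_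
      have := mem_copySites_of_copyTiles_ne_none hx
      simp only [copySites, List.mem_cons, List.not_mem_nil, or_false] at this
      rcases this with rfl | rfl | rfl | rfl <;> simp [siteRotation, q]
    rw [hq, edgesMatch_iff_edgesMatchOn (hS q), edgesMatchOn_copySolution_iff] at hk
    exact ⟨q, hk, hq⟩
  · rintro ⟨q, hq, rfl⟩
    rw [edgesMatch_iff_edgesMatchOn (hS q), edgesMatchOn_copySolution_iff]
    exact ⟨⟨_, rfl⟩, hq⟩

set_option maxRecDepth 10000 in
theorem copyRotations_input_determines_outputs {c : Color}
    (hc : c ∈ ({blue, red} : Set Color)) :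
    ∃ q ∈ copyRotations,
      (SolColor (copySolution q) (0, 0) 3 c ∧ SolColor (copySolution q) (0, 1) 0 c ∧
        SolColor (copySolution q) (1, 2) 0 c) ∧
      ∀ q' ∈ copyRotations, SolColor (copySolution q') (0, 0) 3 c → q' = q := by
  rcases hc with rfl | rfl
  · exact ⟨(1, 4, 1, 4), by decide, by decide, by decide⟩
  · exact ⟨(4, 5, 2, 2), by decide, by decide, by decide⟩

/-- the three-color COPY subpuzzle: one input boundary edge at the bottom and two output boundary edges at the top in two distinct columns; for each color `c ∈ {blue, red}` there is exactly one solution with color `c` at the input edge, and it has color `c` at both output edges. -/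
theorem three_color_COPY_subpuzzle :
    ∃ (P : Puzzle) (xIn yOut₁ yOut₂ : ℤ × ℤ),
      IsBoundary P xIn 3 ∧ IsBoundary P yOut₁ 0 ∧ IsBoundary P yOut₂ 0 ∧
      yOut₁.1 ≠ yOut₂.1 ∧ xIn.2 < yOut₁.2 ∧ xIn.2 < yOut₂.2 ∧
      ∀ c ∈ ({Color.blue, Color.red} : Set Color),
        ∃ sol : ℤ × ℤ → Option Tile,
          (IsSolution P sol ∧ SolColor sol xIn 3 c ∧
            SolColor sol yOut₁ 0 c ∧ SolColor sol yOut₂ 0 c) ∧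
          (∀ sol' : ℤ × ℤ → Option Tile,
            IsSolution P sol' → SolColor sol' xIn 3 c → sol' = sol) := by
  refine ⟨copyPuzzle, (0, 0), (0, 1), (1, 2), by decide, by decide, by decide, by decide,
    by decide, by decide, fun c hc => ?_⟩
  obtain ⟨q, hq, hcolors, hunique⟩ := copyRotations_input_determines_outputs hc
  refine ⟨copySolution q, ⟨isSolution_copyPuzzle_iff.2 ⟨q, hq, rfl⟩, hcolors⟩,
    fun sol' hsol' hin => ?_⟩
  obtain ⟨q', hq', rfl⟩ := isSolution_copyPuzzle_iff.1 hsol'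
  rw [hunique q' hq' hin]
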